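/- Let 1 ≤ p < ∞ and let a, b, c ∈ ℂ with |a| = 1 and |c| = e^{−|b|²/2}. Set ψ(z) = a·z + b and u(z) = c · exp(−a·conj(b)·z). Then for every entire function f : ℂ → ℂ, ∫_ℂ |u(z) · f(ψ(z))|^p · exp(−p|z|²/2) dA(z) = ∫_ℂ |f(z)|^p · exp(−p|z|²/2) dA(z); that is, W_{(u,ψ)} f = u·(f∘ψ) is an isometry for the Fock space norm. -/

import Mathlib

open MeasureTheory

/-!
Since `|a| = 1`, `|az + b|² = |z|² + |b|² + 2 Re(a b̄ z)`, and the normalisation of `c` makes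
`|u(z)| e^{-|z|²/2} = e^{-|ψ(z)|²/2}`. Hence the integrand on the left is the right-hand
integrand composed with `ψ`, a rotation followed by a translation, both of which preserve
Lebesgue measure.
-/

theorem LinearIsometryEquiv.integral_comp_add {E F G : Type*}
    [NormedAddCommGroup E] [InnerProductSpace ℝ E] [FiniteDimensional ℝ E]
    [MeasurableSpace E] [BorelSpace E]
    [NormedAddCommGroup F] [InnerProductSpace ℝ F] [FiniteDimensional ℝ F]
    [MeasurableSpace F] [BorelSpace F]
    [NormedAddCommGroup G] [NormedSpace ℝ G]
    (L : E ≃ₗᵢ[ℝ] F) (g : F → G) (b : F) :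
    ∫ z, g (L z + b) = ∫ z, g z :=
  (L.measurePreserving.integral_comp L.toHomeomorph.measurableEmbedding (g <| · + b)).trans
    (integral_add_right_eq_self g b)

theorem Complex.integral_comp_mul_add_of_norm_eq_one {G : Type*}
    [NormedAddCommGroup G] [NormedSpace ℝ G] {a : ℂ} (ha : ‖a‖ = 1) (g : ℂ → G) (b : ℂ) :
    ∫ z, g (a * z + b) = ∫ z, g z :=
  (rotation ⟨a, mem_sphere_zero_iff_norm.mpr ha⟩).integral_comp_add g b

theorem Complex.norm_mul_add_sq {a : ℂ} (ha : ‖a‖ = 1) (b z : ℂ) :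
    ‖a * z + b‖ ^ 2 = ‖z‖ ^ 2 + ‖b‖ ^ 2 + 2 * (a * starRingEnd ℂ b * z).re := by
  simp only [← Complex.normSq_eq_norm_sq, Complex.normSq_add, Complex.normSq_mul,
    Complex.normSq_eq_norm_sq a, ha]
  ring_nf

theorem Complex.norm_mul_exp_mul_gaussian {a b c : ℂ} (ha : ‖a‖ = 1)
    (hc : ‖c‖ = Real.exp (-(‖b‖ ^ 2) / 2)) (z : ℂ) :
    ‖c * Complex.exp (-(a * starRingEnd ℂ b * z))‖ * Real.exp (-(‖z‖ ^ 2) / 2)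
      = Real.exp (-(‖a * z + b‖ ^ 2) / 2) := by
  rw [norm_mul, hc, Complex.norm_exp, Complex.neg_re, ← Real.exp_add, ← Real.exp_add,
    Complex.norm_mul_add_sq ha]
  ring_nf

theorem weighted_composition_isometry_general (p : ℝ) (a b c : ℂ)
    (ha : ‖a‖ = 1) (hc : ‖c‖ = Real.exp (-(‖b‖ ^ 2) / 2))
    (ψ u : ℂ → ℂ) (hψ : ∀ z : ℂ, ψ z = a * z + b)
    (hu : ∀ z : ℂ, u z = c * Complex.exp (-(a * (starRingEnd ℂ) b * z)))
    (f : ℂ → ℂ) :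
    ∫ z : ℂ, ‖u z * f (ψ z)‖ ^ p * Real.exp (-(p * ‖z‖ ^ 2) / 2)
      = ∫ z : ℂ, ‖f z‖ ^ p * Real.exp (-(p * ‖z‖ ^ 2) / 2) := by
  have weight_rpow (x : ℝ) : Real.exp (-(p * x) / 2) = Real.exp (-x / 2) ^ p := by
    rw [← Real.exp_mul]; ring_nf
  have integrand_eq (z : ℂ) : ‖u z * f (ψ z)‖ ^ p * Real.exp (-(p * ‖z‖ ^ 2) / 2)
      = ‖f (a * z + b)‖ ^ p * Real.exp (-(p * ‖a * z + b‖ ^ 2) / 2) := by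
    rw [weight_rpow, weight_rpow, ← Complex.norm_mul_exp_mul_gaussian ha hc, hu, hψ, norm_mul,
      Real.mul_rpow (norm_nonneg _) (norm_nonneg _),
      Real.mul_rpow (norm_nonneg _) (Real.exp_pos _).le]
    ring
  simp_rw [integrand_eq]
  exact Complex.integral_comp_mul_add_of_norm_eq_one ha
    (fun w => ‖f w‖ ^ p * Real.exp (-(p * ‖w‖ ^ 2) / 2)) b

/-- for `|a| = 1`, `|c| = e^{−|b|²/2}`, `ψ(z) = az + b` and
`u(z) = c·exp(−a·conj(b)·z)`, the operator `W_{(u,ψ)} f = u·(f ∘ ψ)` is an isometry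
for the Fock space norm. -/
theorem weighted_composition_isometry (p : ℝ) (hp : 1 ≤ p) (a b c : ℂ)
    (ha : ‖a‖ = 1) (hc : ‖c‖ = Real.exp (-(‖b‖ ^ 2) / 2))
    (ψ u : ℂ → ℂ) (hψ : ∀ z : ℂ, ψ z = a * z + b)
    (hu : ∀ z : ℂ, u z = c * Complex.exp (-(a * (starRingEnd ℂ) b * z)))
    (f : ℂ → ℂ) (hf : Differentiable ℂ f) :
    ∫ z : ℂ, ‖u z * f (ψ z)‖ ^ p * Real.exp (-(p * ‖z‖ ^ 2) / 2)
      = ∫ z : ℂ, ‖f z‖ ^ p * Real.exp (-(p * ‖z‖ ^ 2) / 2) :=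
  weighted_composition_isometry_general p a b c ha hc ψ u hψ hu f
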